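/- Let (S(t)) be a C₀-semigroup on H, Q a bounded self-adjoint nonnegative operator, and (S_Q(t))_{t≥0} a C₀-semigroup of self-adjoint operators on H with S(t)Q^{1/2} = Q^{1/2}S_Q(t) for all t ≥ 0. Then S(s)QS(s)* = Q^{1/2}S_Q(2s)Q^{1/2} for every s ≥ 0, and consequently for every t > 0, Q_t = Q^{1/2} (∫₀^t S_Q(2s) ds) Q^{1/2}, where Q_t x = ∫₀^t S(s)QS(s)*x ds and the inner integral is a strong Bochner integral. -/
import Mathlib


/-!
STATEMENT 11.  Let (S(t)) be a C₀-semigroup on a separable real Hilbert space H, Q a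
bounded self-adjoint nonnegative operator with square root Q^{1/2}, and (S_Q(t)) a
C₀-semigroup of self-adjoint operators on H with S(t)Q^{1/2} = Q^{1/2}S_Q(t) for all
t ≥ 0.  Then S(s)QS(s)* = Q^{1/2}S_Q(2s)Q^{1/2} for every s ≥ 0, and consequently for
every t > 0, Q_t = Q^{1/2}(∫₀^t S_Q(2s)ds)Q^{1/2}, where Q_tx = ∫₀^t S(s)QS(s)*x ds and
the inner integral is a strong Bochner integral.
-/

open MeasureTheory Filter Set ContinuousLinearMap
open scoped RealInnerProductSpace

noncomputable section

variable {H : Type*} [NormedAddCommGroup H] [InnerProductSpace ℝ H] [CompleteSpace H]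

theorem statement11 [TopologicalSpace.SeparableSpace H]
    (S : ℝ → H →L[ℝ] H)
    (hS0 : S 0 = 1)
    (hSadd : ∀ s t : ℝ, 0 ≤ s → 0 ≤ t → S (s + t) = (S s).comp (S t))
    (hScont : ∀ x : H, ContinuousOn (fun t => S t x) (Set.Ici 0))
    (Q sqrtQ : H →L[ℝ] H) (hQsa : IsSelfAdjoint Q) (hQnn : ∀ x : H, 0 ≤ ⟪Q x, x⟫)
    (hsqrt_sa : IsSelfAdjoint sqrtQ) (hsqrt_nn : ∀ x : H, 0 ≤ ⟪sqrtQ x, x⟫)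
    (hsqrt_sq : sqrtQ.comp sqrtQ = Q)
    (SQ : ℝ → H →L[ℝ] H)
    (hSQ0 : SQ 0 = 1)
    (hSQadd : ∀ s t : ℝ, 0 ≤ s → 0 ≤ t → SQ (s + t) = (SQ s).comp (SQ t))
    (hSQcont : ∀ x : H, ContinuousOn (fun t => SQ t x) (Set.Ici 0))
    (hSQsa : ∀ t : ℝ, 0 ≤ t → IsSelfAdjoint (SQ t))
    (hintertwine : ∀ t : ℝ, 0 ≤ t → (S t).comp sqrtQ = sqrtQ.comp (SQ t)) :
    (∀ s : ℝ, 0 ≤ s → ∀ x : H,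
        S s (Q (ContinuousLinearMap.adjoint (S s) x)) = sqrtQ (SQ (2 * s) (sqrtQ x))) ∧
      (∀ t : ℝ, 0 < t → ∀ x : H,
        (∫ s in Set.Ioc (0:ℝ) t, S s (Q (ContinuousLinearMap.adjoint (S s) x))) =
          sqrtQ (∫ s in Set.Ioc (0:ℝ) t, SQ (2 * s) (sqrtQ x))) := by
  have key : ∀ s : ℝ, 0 ≤ s → ∀ x : H,
      S s (Q (ContinuousLinearMap.adjoint (S s) x)) = sqrtQ (SQ (2 * s) (sqrtQ x)) := by
    intro s hs x
    -- adjoint of intertwine: sqrtQ ∘ (S s)* = SQ s ∘ sqrtQ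
    have hadj : sqrtQ.comp (ContinuousLinearMap.adjoint (S s)) = (SQ s).comp sqrtQ := by
      have := congrArg ContinuousLinearMap.adjoint (hintertwine s hs)
      rwa [ContinuousLinearMap.adjoint_comp, ContinuousLinearMap.adjoint_comp,
        hsqrt_sa.adjoint_eq, (hSQsa s hs).adjoint_eq] at this
    have h1 : sqrtQ (ContinuousLinearMap.adjoint (S s) x) = SQ s (sqrtQ x) := by
      have := congrFun (congrArg DFunLike.coe hadj) x
      simpa using this
    have h2 : ∀ y : H, Q y = sqrtQ (sqrtQ y) := by
      intro y
      have := congrFun (congrArg DFunLike.coe hsqrt_sq) y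
      simpa using this.symm
    have h3 : ∀ y : H, S s (sqrtQ y) = sqrtQ (SQ s y) := by
      intro y
      have := congrFun (congrArg DFunLike.coe (hintertwine s hs)) y
      simpa using this
    have h4 : SQ (2 * s) (sqrtQ x) = SQ s (SQ s (sqrtQ x)) := by
      have := hSQadd s s hs hs
      rw [two_mul, this]; rfl
    rw [h2, h3, h1, h4]
  refine ⟨key, ?_⟩
  intro t ht x
  have hcont : ContinuousOn (fun s : ℝ => SQ (2 * s) (sqrtQ x)) (Set.Icc 0 t) := by
    have : ContinuousOn (fun u : ℝ => SQ u (sqrtQ x)) (Set.Ici 0) := hSQcont (sqrtQ x)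
    exact this.comp (continuous_const.mul continuous_id).continuousOn
      (fun s hs => Set.mem_Ici.2 (mul_nonneg (by norm_num) hs.1))
  have hint : IntegrableOn (fun s : ℝ => SQ (2 * s) (sqrtQ x)) (Set.Ioc 0 t) := by
    exact (hcont.integrableOn_compact isCompact_Icc).mono_set Set.Ioc_subset_Icc_self
  calc (∫ s in Set.Ioc (0:ℝ) t, S s (Q (ContinuousLinearMap.adjoint (S s) x)))
      = ∫ s in Set.Ioc (0:ℝ) t, sqrtQ (SQ (2 * s) (sqrtQ x)) := by
        refine setIntegral_congr_fun measurableSet_Ioc (fun s hs => ?_)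
        exact key s hs.1.le x
    _ = sqrtQ (∫ s in Set.Ioc (0:ℝ) t, SQ (2 * s) (sqrtQ x)) :=
        (ContinuousLinearMap.integral_comp_comm sqrtQ hint)
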